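/- Strict lower bound below the Nehari manifold (Lemma 2.5, case (A)): Let 1 ≤ N ≤ 5, γ₁, γ₂, γ₃ > 0, c ∈ ℝ^N, and ω > max{γ₁|c|²/4, γ₂|c|²/4, γ₃|c|²/8}. If (u,v,w) ∈ H¹(ℝ^N)³ satisfies Ñ_{ω,c}(u,v,w) < 0, then (1/3) Q̃_{ω,c}(u,v,w) > μ̃_{ω,c}. -/

import Mathlib

noncomputable section

open MeasureTheory Filter Complex ComplexConjugate

/-- Euclidean space `ℝ^N`. -/
abbrev Rn (N : ℕ) : Type := EuclideanSpace ℝ (Fin N)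

/-- `ℂ^N`, the target of gradients of complex-valued functions on `ℝ^N`. -/
abbrev Cn (N : ℕ) : Type := EuclideanSpace ℂ (Fin N)

/-- `du` is the weak (distributional) gradient of `u` :
`∫ u ∂ᵢθ = - ∫ (du)ᵢ θ` for every smooth compactly supported test function `θ`. -/
def IsWeakGrad {N : ℕ} (u : Rn N → ℂ) (du : Rn N → Cn N) : Prop :=
  ∀ θ : Rn N → ℂ, ContDiff ℝ (⊤ : ℕ∞) θ → HasCompactSupport θ → ∀ i : Fin N,
    (∫ x, u x * fderiv ℝ θ x (EuclideanSpace.single i (1 : ℝ)))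
      = - ∫ x, du x i * θ x

/-- A complex-valued function on `ℝ^N` bundled with a (candidate) gradient. -/
structure WFun (N : ℕ) where
  toFun : Rn N → ℂ
  grad : Rn N → Cn N

namespace WFun

/-- Membership in `H¹(ℝ^N)` : `u ∈ L²`, and the bundled gradient is a genuine weak
gradient belonging to `L²`. -/
def InH1 {N : ℕ} (u : WFun N) : Prop :=
  IsWeakGrad u.toFun u.grad ∧ MemLp u.toFun 2 (volume : Measure (Rn N)) ∧
    MemLp u.grad 2 (volume : Measure (Rn N))

/-- Membership in the homogeneous Sobolev space `Ḣ¹(ℝ^N)` (`N ≥ 3`) :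
`u ∈ L^{2N/(N-2)}`, and the bundled gradient is a genuine weak gradient in `L²`. -/
def InH1dot {N : ℕ} (u : WFun N) : Prop :=
  IsWeakGrad u.toFun u.grad ∧
    MemLp u.toFun (ENNReal.ofReal (2 * (N : ℝ) / ((N : ℝ) - 2))) (volume : Measure (Rn N)) ∧
    MemLp u.grad 2 (volume : Measure (Rn N))

/-- A function is (essentially) zero. -/
def IsZero {N : ℕ} (u : WFun N) : Prop :=
  u.toFun =ᵐ[(volume : Measure (Rn N))] 0

end WFun

/-- The triple `(u,v,w)` is trivial, i.e. equals `(0,0,0)` a.e. -/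
def Triv {N : ℕ} (u v w : WFun N) : Prop := u.IsZero ∧ v.IsZero ∧ w.IsZero

/-- `‖∇u‖_{L²}²`. -/
def kin {N : ℕ} (u : WFun N) : ℝ := ∫ x, ‖u.grad x‖ ^ 2

/-- `‖u‖_{L²}²`. -/
def msq {N : ℕ} (u : WFun N) : ℝ := ∫ x, ‖u.toFun x‖ ^ 2

/-- `K(u,v,w) = ∫ |∇u|² + |∇v|² + |∇w|²`. -/
def Kfun {N : ℕ} (u v w : WFun N) : ℝ := kin u + kin v + kin w

/-- The oscillating phase `e^{i b c·x}`. -/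
def phase {N : ℕ} (b : ℝ) (c x : Rn N) : ℂ :=
  Complex.exp (Complex.I * Complex.ofReal (b * (inner ℝ c x : ℝ)))

/-- `Ṽ(u,v,w) = Re ∫ e^{i b c·x} u v conj w` on raw functions. -/
def Vraw {N : ℕ} (b : ℝ) (c : Rn N) (u v w : Rn N → ℂ) : ℝ :=
  (∫ x, phase b c x * u x * v x * conj (w x)).re

/-- `β = (γ₁+γ₂-γ₃)/2`. -/
def betaC (g1 g2 g3 : ℝ) : ℝ := (g1 + g2 - g3) / 2

/-- The quadratic part `Q̃_{ω,c}` of the action functional. -/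
def Qt {N : ℕ} (g1 g2 g3 om : ℝ) (c : Rn N) (u v w : WFun N) : ℝ :=
  (1 / 2) * Kfun u v w
    + (1 / 2) * (g1 * om - g1 ^ 2 * ‖c‖ ^ 2 / 4) * msq u
    + (1 / 2) * (g2 * om - g2 ^ 2 * ‖c‖ ^ 2 / 4) * msq v
    + (1 / 2) * (2 * g3 * om - g3 ^ 2 * ‖c‖ ^ 2 / 4) * msq w

/-- `Ṽ(u,v,w) = Re ∫ e^{iβ c·x} u v conj w`. -/
def Vt {N : ℕ} (g1 g2 g3 : ℝ) (c : Rn N) (u v w : WFun N) : ℝ :=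
  Vraw (betaC g1 g2 g3) c u.toFun v.toFun w.toFun

/-- The action `S̃_{ω,c} = Q̃_{ω,c} - Ṽ`. -/
def St {N : ℕ} (g1 g2 g3 om : ℝ) (c : Rn N) (u v w : WFun N) : ℝ :=
  Qt g1 g2 g3 om c u v w - Vt g1 g2 g3 c u v w

/-- The Nehari functional `Ñ_{ω,c} = 2Q̃_{ω,c} - 3Ṽ`. -/
def Nt {N : ℕ} (g1 g2 g3 om : ℝ) (c : Rn N) (u v w : WFun N) : ℝ :=
  2 * Qt g1 g2 g3 om c u v w - 3 * Vt g1 g2 g3 c u v w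

/-- The Nehari level `μ̃_{ω,c}` relative to function spaces `X, Y, Z` for the three
components: the infimum of `S̃_{ω,c}` over nonzero triples on the Nehari manifold. -/
def mutX {N : ℕ} (g1 g2 g3 om : ℝ) (c : Rn N) (X Y Z : WFun N → Prop) : ℝ :=
  sInf {s : ℝ | ∃ u v w : WFun N, X u ∧ Y v ∧ Z w ∧ ¬ Triv u v w ∧
    Nt g1 g2 g3 om c u v w = 0 ∧ s = St g1 g2 g3 om c u v w}

/-- The Nehari level `μ̃_{ω,c}` over `H¹ × H¹ × H¹`. -/
def muTilde {N : ℕ} (g1 g2 g3 om : ℝ) (c : Rn N) : ℝ :=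
  mutX g1 g2 g3 om c WFun.InH1 WFun.InH1 WFun.InH1

/-- `i`-th component of the momentum `P(u,v,w)`. -/
def momComp {N : ℕ} (g1 g2 g3 : ℝ) (u v w : WFun N) (i : Fin N) : ℝ :=
  g1 * (∫ x, Complex.I * u.grad x i * conj (u.toFun x)).re
    + g2 * (∫ x, Complex.I * v.grad x i * conj (v.toFun x)).re
    + g3 * (∫ x, Complex.I * w.grad x i * conj (w.toFun x)).re

/-- The scalar product `c · P(u,v,w)` of `c` with the momentum. -/
def cdotP {N : ℕ} (g1 g2 g3 : ℝ) (c : Rn N) (u v w : WFun N) : ℝ :=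
  ∑ i, c i * momComp g1 g2 g3 u v w i

/-- `V(u,v,w) = Re ∫ u v conj w`. -/
def V0 {N : ℕ} (u v w : WFun N) : ℝ :=
  (∫ x, u.toFun x * v.toFun x * conj (w.toFun x)).re

/-- The (untilded) quadratic functional
`Q_{ω,c} = ½K + (ωγ₁/2)‖u‖² + (ωγ₂/2)‖v‖² + γ₃ω‖w‖² + ½ c·P`. -/
def Qf {N : ℕ} (g1 g2 g3 om : ℝ) (c : Rn N) (u v w : WFun N) : ℝ :=
  (1 / 2) * Kfun u v w + om * g1 / 2 * msq u + om * g2 / 2 * msq v + g3 * om * msq w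
    + (1 / 2) * cdotP g1 g2 g3 c u v w

/-- The action `S_{ω,c} = Q_{ω,c} - V`. -/
def Sf {N : ℕ} (g1 g2 g3 om : ℝ) (c : Rn N) (u v w : WFun N) : ℝ :=
  Qf g1 g2 g3 om c u v w - V0 u v w

/-- The Nehari functional `N_{ω,c} = 2Q_{ω,c} - 3V`. -/
def Nf {N : ℕ} (g1 g2 g3 om : ℝ) (c : Rn N) (u v w : WFun N) : ℝ :=
  2 * Qf g1 g2 g3 om c u v w - 3 * V0 u v w

/-- The Nehari level `μ_{ω,c}` for the untilded functionals. -/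
def muf {N : ℕ} (g1 g2 g3 om : ℝ) (c : Rn N) : ℝ :=
  sInf {s : ℝ | ∃ u v w : WFun N, u.InH1 ∧ v.InH1 ∧ w.InH1 ∧ ¬ Triv u v w ∧
    Nf g1 g2 g3 om c u v w = 0 ∧ s = Sf g1 g2 g3 om c u v w}

/-- `u` is a distributional solution of `-Δu + a u = f`: for every smooth compactly
supported `θ`, `∫ ∇u · conj ∇θ + a ∫ u conj θ = ∫ f conj θ`. -/
def IsWeakSol {N : ℕ} (a : ℝ) (u : WFun N) (f : Rn N → ℂ) : Prop :=
  ∀ θ : Rn N → ℂ, ContDiff ℝ (⊤ : ℕ∞) θ → HasCompactSupport θ →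
    (∫ x, ∑ i, u.grad x i * conj (fderiv ℝ θ x (EuclideanSpace.single i (1 : ℝ))))
      + (a : ℂ) * (∫ x, u.toFun x * conj (θ x))
      = ∫ x, f x * conj (θ x)

/-- `(u,v,w)` is a distributional solution of the stationary system
`-Δu + (γ₁ω-γ₁²|c|²/4)u = e^{-iβc·x} w conj v`,
`-Δv + (γ₂ω-γ₂²|c|²/4)v = e^{-iβc·x} w conj u`,
`-Δw + (2γ₃ω-γ₃²|c|²/4)w = e^{iβc·x} u v`. -/
def SolvesSystem {N : ℕ} (g1 g2 g3 om : ℝ) (c : Rn N) (u v w : WFun N) : Prop :=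
  IsWeakSol (g1 * om - g1 ^ 2 * ‖c‖ ^ 2 / 4) u
      (fun x => phase (-(betaC g1 g2 g3)) c x * w.toFun x * conj (v.toFun x)) ∧
    IsWeakSol (g2 * om - g2 ^ 2 * ‖c‖ ^ 2 / 4) v
      (fun x => phase (-(betaC g1 g2 g3)) c x * w.toFun x * conj (u.toFun x)) ∧
    IsWeakSol (2 * g3 * om - g3 ^ 2 * ‖c‖ ^ 2 / 4) w
      (fun x => phase (betaC g1 g2 g3) c x * u.toFun x * v.toFun x)

/-- `(u,v,w)` is a distributional solution of the standing-wave system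
`-Δu + γ₁ω u = w v`, `-Δv + γ₂ω v = w u`, `-Δw + 2γ₃ω w = u v`. -/
def SolvesStanding {N : ℕ} (g1 g2 g3 om : ℝ) (u v w : WFun N) : Prop :=
  IsWeakSol (g1 * om) u (fun x => w.toFun x * v.toFun x) ∧
    IsWeakSol (g2 * om) v (fun x => w.toFun x * u.toFun x) ∧
    IsWeakSol (2 * g3 * om) w (fun x => u.toFun x * v.toFun x)

/-- Weak convergence in `H¹(ℝ^N)` of a sequence of functions-with-gradients. -/
def WeakH1 {N : ℕ} (un : ℕ → WFun N) (u : WFun N) : Prop :=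
  ∀ g : WFun N, g.InH1 →
    Tendsto (fun n => (∫ x, (un n).toFun x * conj (g.toFun x)) +
        ∫ x, ∑ i, (un n).grad x i * conj (g.grad x i)) atTop
      (nhds ((∫ x, u.toFun x * conj (g.toFun x)) +
        ∫ x, ∑ i, u.grad x i * conj (g.grad x i)))

/-- Squared `H¹`-distance between two functions given with their gradients. -/
def h1distSq {N : ℕ} (f g : Rn N → ℂ) (df dg : Rn N → Cn N) : ℝ :=
  (∫ x, ‖f x - g x‖ ^ 2) + ∫ x, ‖df x - dg x‖ ^ 2

/-- `f` is a positive (real-valued) function. -/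
def IsPosFun {N : ℕ} (f : Rn N → ℂ) : Prop := ∀ x, 0 < (f x).re ∧ (f x).im = 0

/-- `f` is radially symmetric. -/
def IsRadial {N : ℕ} (f : Rn N → ℂ) : Prop := ∀ x y : Rn N, ‖x‖ = ‖y‖ → f x = f y

/-- `M(u,v,w) = γ₁‖u‖² + γ₂‖v‖² + 2γ₃‖w‖²`. -/
def Mmass {N : ℕ} (g1 g2 g3 : ℝ) (u v w : WFun N) : ℝ :=
  g1 * msq u + g2 * msq v + 2 * g3 * msq w

/-- The Galilean modulation `e^{i(g/2) c·x} u`, with the correspondingly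
modulated gradient. -/
def modW {N : ℕ} (g : ℝ) (c : Rn N) (u : WFun N) : WFun N where
  toFun := fun x => Complex.exp (Complex.I * Complex.ofReal (g / 2 * (inner ℝ c x : ℝ))) * u.toFun x
  grad := fun x => (WithLp.equiv 2 (Fin N → ℂ)).symm fun i =>
    Complex.exp (Complex.I * Complex.ofReal (g / 2 * (inner ℝ c x : ℝ))) *
      (u.grad x i + Complex.I * Complex.ofReal (g / 2 * c i) * u.toFun x)

/-- The Laplacian of a (smooth) complex-valued function. -/
def lapC {N : ℕ} (f : Rn N → ℂ) (x : Rn N) : ℂ :=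
  ∑ i : Fin N, fderiv ℝ (fun y => fderiv ℝ f y (EuclideanSpace.single i (1 : ℝ))) x
    (EuclideanSpace.single i (1 : ℝ))

/-- The Laplacian of a (smooth) real-valued function. -/
def lapR {N : ℕ} (f : Rn N → ℝ) (x : Rn N) : ℝ :=
  ∑ i : Fin N, fderiv ℝ (fun y => fderiv ℝ f y (EuclideanSpace.single i (1 : ℝ))) x
    (EuclideanSpace.single i (1 : ℝ))

/-- `|∇f(x)|²` for a real-valued function. -/
def gradSq {N : ℕ} (f : Rn N → ℝ) (x : Rn N) : ℝ :=
  ∑ i : Fin N, (fderiv ℝ f x (EuclideanSpace.single i (1 : ℝ))) ^ 2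


namespace NehariAux

variable {N : ℕ}

/-- Pointwise real scaling of a function with its gradient. -/
def sm (t : ℝ) (u : WFun N) : WFun N where
  toFun := fun x => (t : ℂ) * u.toFun x
  grad := fun x => (t : ℂ) • u.grad x

@[simp] lemma sm_toFun (t : ℝ) (u : WFun N) : (sm t u).toFun = fun x => (t : ℂ) * u.toFun x := rfl
@[simp] lemma sm_grad (t : ℝ) (u : WFun N) : (sm t u).grad = fun x => (t : ℂ) • u.grad x := rfl

lemma kin_nonneg (u : WFun N) : 0 ≤ kin u :=
  integral_nonneg fun x => by positivity

lemma msq_nonneg (u : WFun N) : 0 ≤ msq u :=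
  integral_nonneg fun x => by positivity

lemma kin_sm (t : ℝ) (u : WFun N) : kin (sm t u) = t ^ 2 * kin u := by
  unfold kin
  have h : ∀ x : Rn N, ‖(sm t u).grad x‖ ^ 2 = t ^ 2 * ‖u.grad x‖ ^ 2 := by
    intro x
    rw [sm_grad]
    rw [norm_smul]
    simp [mul_pow, Complex.norm_real, Real.norm_eq_abs, sq_abs]
  simp_rw [h]
  exact integral_const_mul _ _

lemma msq_sm (t : ℝ) (u : WFun N) : msq (sm t u) = t ^ 2 * msq u := by
  unfold msq
  have h : ∀ x : Rn N, ‖(sm t u).toFun x‖ ^ 2 = t ^ 2 * ‖u.toFun x‖ ^ 2 := by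
    intro x
    rw [sm_toFun]
    rw [norm_mul]
    simp [mul_pow, Complex.norm_real, Real.norm_eq_abs, sq_abs]
  simp_rw [h]
  exact integral_const_mul _ _

lemma Vt_sm (g1 g2 g3 t : ℝ) (c : Rn N) (u v w : WFun N) :
    Vt g1 g2 g3 c (sm t u) (sm t v) (sm t w) = t ^ 3 * Vt g1 g2 g3 c u v w := by
  unfold Vt Vraw
  have h : ∀ x : Rn N,
      phase (betaC g1 g2 g3) c x * (sm t u).toFun x * (sm t v).toFun x *
        conj ((sm t w).toFun x)
      = ((t ^ 3 : ℝ) : ℂ) *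
        (phase (betaC g1 g2 g3) c x * u.toFun x * v.toFun x * conj (w.toFun x)) := by
    intro x
    rw [sm_toFun, sm_toFun, sm_toFun]
    simp only [map_mul, Complex.conj_ofReal]
    push_cast
    ring
  simp_rw [h]
  rw [integral_const_mul, Complex.re_ofReal_mul]

lemma Qt_sm (g1 g2 g3 om t : ℝ) (c : Rn N) (u v w : WFun N) :
    Qt g1 g2 g3 om c (sm t u) (sm t v) (sm t w) = t ^ 2 * Qt g1 g2 g3 om c u v w := by
  unfold Qt Kfun
  rw [kin_sm, kin_sm, kin_sm, msq_sm, msq_sm, msq_sm]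
  ring

lemma InH1_sm (t : ℝ) (u : WFun N) (hu : u.InH1) : (sm t u).InH1 := by
  refine ⟨?_, ?_, ?_⟩
  · intro θ hθ1 hθ2 i
    have h := hu.1 θ hθ1 hθ2 i
    have e1 : ∀ x : Rn N, (sm t u).toFun x * fderiv ℝ θ x (EuclideanSpace.single i (1 : ℝ))
        = (t : ℂ) * (u.toFun x * fderiv ℝ θ x (EuclideanSpace.single i (1 : ℝ))) := by
      intro x; rw [sm_toFun]; ring
    have e2 : ∀ x : Rn N, (sm t u).grad x i * θ x = (t : ℂ) * (u.grad x i * θ x) := by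
      intro x; rw [sm_grad]; simp [PiLp.smul_apply, smul_eq_mul]; ring
    simp_rw [e1, e2, integral_const_mul, h]
    ring
  · exact hu.2.1.const_mul _
  · exact hu.2.2.const_smul ((t : ℂ))

lemma toFun_ae_zero_of_msq_eq_zero (u : WFun N) (hu : u.InH1) (h : msq u = 0) :
    u.toFun =ᵐ[(volume : Measure (Rn N))] 0 := by
  have hint : Integrable (fun x => ‖u.toFun x‖ ^ 2) (volume : Measure (Rn N)) := by
    have := hu.2.1.integrable_norm_rpow (by norm_num) (by norm_num)
    simpa [ENNReal.toReal_ofNat, Real.rpow_natCast] using this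
  have h0 : (fun x => ‖u.toFun x‖ ^ 2) =ᵐ[(volume : Measure (Rn N))] 0 := by
    rw [← MeasureTheory.integral_eq_zero_iff_of_nonneg (fun x => by positivity) hint]
    exact h
  filter_upwards [h0] with x hx
  have hx' : ‖u.toFun x‖ ^ 2 = 0 := hx
  have : ‖u.toFun x‖ = 0 := by
    nlinarith [norm_nonneg (u.toFun x)]
  simpa using this

lemma Vt_zero_of_left_zero (g1 g2 g3 : ℝ) (c : Rn N) (u v w : WFun N)
    (h : u.toFun =ᵐ[(volume : Measure (Rn N))] 0) : Vt g1 g2 g3 c u v w = 0 := by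
  unfold Vt Vraw
  have h0 : (fun x => phase (betaC g1 g2 g3) c x * u.toFun x * v.toFun x * conj (w.toFun x))
      =ᵐ[(volume : Measure (Rn N))] 0 := by
    filter_upwards [h] with x hx
    simp only [Pi.zero_apply] at hx ⊢
    rw [hx]
    ring
  rw [integral_congr_ae h0]
  simp

end NehariAux

/-- Strict lower bound below the Nehari manifold (Lemma 2.5, case (A)) :
if `Ñ_{ω,c}(u,v,w) < 0` then `(1/3) Q̃_{ω,c}(u,v,w) > μ̃_{ω,c}`. -/
theorem below_nehari_manifold_caseA
    (N : ℕ) (hN1 : 1 ≤ N) (hN5 : N ≤ 5)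
    (g1 g2 g3 : ℝ) (hg1 : 0 < g1) (hg2 : 0 < g2) (hg3 : 0 < g3)
    (c : Rn N) (om : ℝ)
    (hom : max (max (g1 * ‖c‖ ^ 2 / 4) (g2 * ‖c‖ ^ 2 / 4)) (g3 * ‖c‖ ^ 2 / 8) < om)
    (u v w : WFun N) (hu : u.InH1) (hv : v.InH1) (hw : w.InH1)
    (hneg : Nt g1 g2 g3 om c u v w < 0) :
    muTilde g1 g2 g3 om c < 1 / 3 * Qt g1 g2 g3 om c u v w := by
  classical
  -- positivity of the coefficients
  have h1 : g1 * ‖c‖ ^ 2 / 4 < om :=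
    lt_of_le_of_lt (le_trans (le_max_left _ _) (le_max_left _ _)) hom
  have h2 : g2 * ‖c‖ ^ 2 / 4 < om :=
    lt_of_le_of_lt (le_trans (le_max_right _ _) (le_max_left _ _)) hom
  have h3 : g3 * ‖c‖ ^ 2 / 8 < om := lt_of_le_of_lt (le_max_right _ _) hom
  have hc1 : 0 < g1 * om - g1 ^ 2 * ‖c‖ ^ 2 / 4 := by nlinarith
  have hc2 : 0 < g2 * om - g2 ^ 2 * ‖c‖ ^ 2 / 4 := by nlinarith
  have hc3 : 0 < 2 * g3 * om - g3 ^ 2 * ‖c‖ ^ 2 / 4 := by nlinarith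
  have hQn : ∀ u' v' w' : WFun N, 0 ≤ Qt g1 g2 g3 om c u' v' w' := by
    intro u' v' w'
    unfold Qt Kfun
    have k1 := NehariAux.kin_nonneg u'
    have k2 := NehariAux.kin_nonneg v'
    have k3 := NehariAux.kin_nonneg w'
    have m1 := NehariAux.msq_nonneg u'
    have m2 := NehariAux.msq_nonneg v'
    have m3 := NehariAux.msq_nonneg w'
    have := mul_nonneg hc1.le m1
    have := mul_nonneg hc2.le m2
    have := mul_nonneg hc3.le m3
    linarith
  obtain ⟨Q, hQdef⟩ : ∃ x : ℝ, x = Qt g1 g2 g3 om c u v w := ⟨_, rfl⟩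
  obtain ⟨Vv, hVdef⟩ : ∃ x : ℝ, x = Vt g1 g2 g3 c u v w := ⟨_, rfl⟩
  have hQ0 : 0 ≤ Q := hQdef ▸ hQn u v w
  have hneg' : 2 * Q - 3 * Vv < 0 := by
    have : 2 * Qt g1 g2 g3 om c u v w - 3 * Vt g1 g2 g3 c u v w < 0 := hneg
    rw [← hQdef, ← hVdef] at this
    exact this
  have hV : 0 < Vv := by linarith
  have hQpos : 0 < Q := by
    rcases lt_or_eq_of_le hQ0 with h | h
    · exact h
    · exfalso
      have hmsq : msq u = 0 := by
        have k1 := NehariAux.kin_nonneg u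
        have k2 := NehariAux.kin_nonneg v
        have k3 := NehariAux.kin_nonneg w
        have m1 := NehariAux.msq_nonneg u
        have m2 := NehariAux.msq_nonneg v
        have m3 := NehariAux.msq_nonneg w
        have hq : (1 / 2) * Kfun u v w
            + (1 / 2) * (g1 * om - g1 ^ 2 * ‖c‖ ^ 2 / 4) * msq u
            + (1 / 2) * (g2 * om - g2 ^ 2 * ‖c‖ ^ 2 / 4) * msq v
            + (1 / 2) * (2 * g3 * om - g3 ^ 2 * ‖c‖ ^ 2 / 4) * msq w = Q := hQdef.symm
        have hK : 0 ≤ Kfun u v w := by unfold Kfun; linarith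
        have p1 := mul_nonneg hc1.le m1
        have p2 := mul_nonneg hc2.le m2
        have p3 := mul_nonneg hc3.le m3
        have hle0 : (g1 * om - g1 ^ 2 * ‖c‖ ^ 2 / 4) * msq u ≤ 0 := by linarith
        have hm : msq u ≤ 0 := by
          by_contra hmc
          push_neg at hmc
          have := mul_pos hc1 hmc
          linarith
        linarith
      have hz := NehariAux.toFun_ae_zero_of_msq_eq_zero u hu hmsq
      have hV0 := NehariAux.Vt_zero_of_left_zero g1 g2 g3 c u v w hz
      rw [← hVdef] at hV0
      linarith
  obtain ⟨t, htdef⟩ : ∃ x : ℝ, x = 2 * Q / (3 * Vv) := ⟨_, rfl⟩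
  have ht0 : 0 < t := htdef ▸ div_pos (by linarith) (by linarith)
  have ht1 : t < 1 := by
    rw [htdef, div_lt_one (by linarith)]
    linarith
  have ht : 3 * Vv * t = 2 * Q := by
    rw [htdef]
    field_simp
  have hQsm : Qt g1 g2 g3 om c (NehariAux.sm t u) (NehariAux.sm t v) (NehariAux.sm t w)
      = t ^ 2 * Q := by
    rw [NehariAux.Qt_sm, ← hQdef]
  have hVsm : Vt g1 g2 g3 c (NehariAux.sm t u) (NehariAux.sm t v) (NehariAux.sm t w)
      = t ^ 3 * Vv := by
    rw [NehariAux.Vt_sm, ← hVdef]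
  have hN0 : Nt g1 g2 g3 om c (NehariAux.sm t u) (NehariAux.sm t v) (NehariAux.sm t w) = 0 := by
    unfold Nt
    rw [hQsm, hVsm]
    linear_combination (-(t ^ 2)) * ht
  have hSval : St g1 g2 g3 om c (NehariAux.sm t u) (NehariAux.sm t v) (NehariAux.sm t w)
      = t ^ 2 * Q / 3 := by
    unfold St
    rw [hQsm, hVsm]
    linear_combination (-(t ^ 2) / 3) * ht
  have hnontriv : ¬ Triv (NehariAux.sm t u) (NehariAux.sm t v) (NehariAux.sm t w) := by
    rintro ⟨h1', _, _⟩
    have hz : u.toFun =ᵐ[(volume : Measure (Rn N))] 0 := by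
      filter_upwards [h1'] with x hx
      have hx' : (t : ℂ) * u.toFun x = 0 := hx
      have htne : (t : ℂ) ≠ 0 := by
        simp only [ne_eq, Complex.ofReal_eq_zero]
        exact ne_of_gt ht0
      simpa [htne] using hx'
    have hV0 := NehariAux.Vt_zero_of_left_zero g1 g2 g3 c u v w hz
    rw [← hVdef] at hV0
    linarith
  have hle : muTilde g1 g2 g3 om c ≤ t ^ 2 * Q / 3 := by
    unfold muTilde mutX
    refine csInf_le ⟨0, ?_⟩ ?_
    · rintro s ⟨u', v', w', _, _, _, _, hN', hs⟩
      have hN'' : 2 * Qt g1 g2 g3 om c u' v' w' - 3 * Vt g1 g2 g3 c u' v' w' = 0 := hN'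
      have hs' : s = Qt g1 g2 g3 om c u' v' w' - Vt g1 g2 g3 c u' v' w' := hs
      have := hQn u' v' w'
      linarith
    · exact ⟨NehariAux.sm t u, NehariAux.sm t v, NehariAux.sm t w,
        NehariAux.InH1_sm t u hu, NehariAux.InH1_sm t v hv, NehariAux.InH1_sm t w hw,
        hnontriv, hN0, hSval.symm⟩
  have ht2 : t ^ 2 < 1 := pow_lt_one₀ ht0.le ht1 two_ne_zero
  have hlt : t ^ 2 * Q / 3 < 1 / 3 * Q := by
    have := mul_lt_mul_of_pos_right ht2 hQpos
    linarith
  rw [← hQdef]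
  linarith
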